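/- arXiv:2505.20891 — 2 statements merged into one kernel-verified Lean document; each statement's English description precedes it below -/
import Mathlib

section
/- The function f(x) = x·log₂(1 + a/(bx + c)) is concave on (0, ∞) for all positive constants a, b, c. -/
/-!
Writing `1 + a / (b x + c) = (b x + (a + c)) / (b x + c)`, the rate is `(log 2)⁻¹` times
`g_{a+c} - g_c`, where `g_d x = x log (b x + d)`. One computes
`g_d'' x = b (b x + 2 d) / (b x + d)²`, and this is antitone in `d` for `b x ≥ 0`, so the second
derivative of `g_{a+c} - g_c` is nonpositive.
-/

open Real Set

section
variable {b d x : ℝ}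

theorem hasDerivAt_mul_log_mul_add (h : b * x + d ≠ 0) :
    HasDerivAt (fun x => x * log (b * x + d)) (log (b * x + d) + b * x / (b * x + d)) x := by
  have hlin : HasDerivAt (fun x => b * x + d) b x := by
    simpa using ((hasDerivAt_id x).const_mul b).add_const d
  exact ((hasDerivAt_id' x).mul (hlin.log h)).congr_deriv (by ring)

theorem hasDerivAt_log_mul_add_add_mul_div (h : b * x + d ≠ 0) :
    HasDerivAt (fun x => log (b * x + d) + b * x / (b * x + d))
      (b * (b * x + 2 * d) / (b * x + d) ^ 2) x := by
  have hmul : HasDerivAt (fun x => b * x) b x := by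
    simpa using (hasDerivAt_id x).const_mul b
  have hlin : HasDerivAt (fun x => b * x + d) b x := hmul.add_const d
  exact ((hlin.log h).add (hmul.div hlin h)).congr_deriv (by field_simp; ring)

end

theorem add_two_mul_div_sq_le {s c A : ℝ} (hs : 0 ≤ s) (hc : 0 < c) (hcA : c ≤ A) :
    (s + 2 * A) / (s + A) ^ 2 ≤ (s + 2 * c) / (s + c) ^ 2 := by
  have hsc : 0 < s + c := by positivity
  have hsA : 0 < s + A := by linarith
  rw [div_le_div_iff₀ (by positivity) (by positivity)]
  have hdiff : (s + 2 * c) * (s + A) ^ 2 - (s + 2 * A) * (s + c) ^ 2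
      = (A - c) * (s * (A + c) + 2 * A * c) := by ring
  have : 0 ≤ (A - c) * (s * (A + c) + 2 * A * c) :=
    mul_nonneg (sub_nonneg.2 hcA) (by nlinarith)
  linarith

theorem concaveOn_mul_log_mul_add_sub_mul_log_mul_add {b c A : ℝ} (hb : 0 ≤ b) (hc : 0 < c)
    (hcA : c ≤ A) :
    ConcaveOn ℝ (Ioi 0) (fun x => x * log (b * x + A) - x * log (b * x + c)) := by
  have hpos : ∀ x ∈ Ioi (0 : ℝ), ∀ d, 0 < d → 0 < b * x + d := fun x (hx : 0 < x) d hd => by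
    positivity
  have hA : 0 < A := hc.trans_le hcA
  have hf' : ∀ x ∈ Ioi (0 : ℝ), HasDerivAt (fun x => x * log (b * x + A) - x * log (b * x + c))
      ((log (b * x + A) + b * x / (b * x + A)) - (log (b * x + c) + b * x / (b * x + c))) x :=
    fun x hx => (hasDerivAt_mul_log_mul_add (hpos x hx A hA).ne').sub
      (hasDerivAt_mul_log_mul_add (hpos x hx c hc).ne')
  have hf'' : ∀ x ∈ Ioi (0 : ℝ),
      HasDerivAt (fun x => (log (b * x + A) + b * x / (b * x + A)) -
        (log (b * x + c) + b * x / (b * x + c)))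
      (b * (b * x + 2 * A) / (b * x + A) ^ 2 - b * (b * x + 2 * c) / (b * x + c) ^ 2) x :=
    fun x hx => (hasDerivAt_log_mul_add_add_mul_div (hpos x hx A hA).ne').sub
      (hasDerivAt_log_mul_add_add_mul_div (hpos x hx c hc).ne')
  refine concaveOn_of_hasDerivWithinAt2_nonpos (convex_Ioi 0)
    (fun x hx => (hf' x hx).continuousAt.continuousWithinAt)
    (by rw [interior_Ioi]; exact fun x hx => (hf' x hx).hasDerivWithinAt)
    (by rw [interior_Ioi]; exact fun x hx => (hf'' x hx).hasDerivWithinAt) ?_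
  · rw [interior_Ioi]
    intro x (hx : 0 < x)
    simp only [mul_div_assoc, sub_nonpos]
    exact mul_le_mul_of_nonneg_left (add_two_mul_div_sq_le (by positivity) hc hcA) hb

/-- The function `f(x) = x·log₂(1 + a/(bx + c))` is concave on `(0, ∞)`
for all positive constants `a, b, c`. -/
theorem rate_concave_on_bandwidth (a b c : ℝ) (ha : 0 < a) (hb : 0 < b) (hc : 0 < c) :
    ConcaveOn ℝ (Set.Ioi (0 : ℝ))
      (fun x : ℝ => x * Real.logb 2 (1 + a / (b * x + c))) := by
  have hconc := (concaveOn_mul_log_mul_add_sub_mul_log_mul_add hb.le hc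
    (le_add_of_nonneg_left ha.le : c ≤ a + c)).smul (inv_nonneg.2 (log_nonneg one_le_two))
  refine hconc.congr fun x (hx : 0 < x) => ?_
  have hbxc : 0 < b * x + c := by positivity
  have hsplit : 1 + a / (b * x + c) = (b * x + (a + c)) / (b * x + c) := by
    field_simp
    ring
  simp only [smul_eq_mul, logb, hsplit]
  rw [log_div (by positivity) hbxc.ne']
  ring
end

section
/- The function x ↦ x·log₂(1 + a/(bx + c)) is strictly increasing on (0, ∞) for a, b, c > 0; i.e., its first derivative log₂(1 + a/(bx+c)) − (abx)/(ln2·(bx+c)·(bx+c+a)) is strictly positive for all x > 0. -/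
/-!
With `d = bx + c`, the derivative of `x · log₂(1 + a/d)` is `log₂(1 + a/d) - abx / (ln 2 · d(d + a))`.
Since `c > 0` we have `bx < d`, so the subtracted term is below `a/(d + a) / ln 2`, and
`a/(d + a) = 1 - (1 + a/d)⁻¹ < ln(1 + a/d)` by the strict form of `1 - y⁻¹ ≤ ln y`.
-/

open Real Set

lemma Real.one_sub_inv_lt_log {y : ℝ} (hy : 0 < y) (hy₁ : y ≠ 1) : 1 - y⁻¹ < log y := by
  have := log_lt_sub_one_of_pos (inv_pos.2 hy) (inv_ne_one.2 hy₁)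
  rw [log_inv] at this
  linarith

lemma Real.div_add_lt_log_one_add_div {a d : ℝ} (ha : 0 < a) (hd : 0 < d) :
    a / (d + a) < log (1 + a / d) := by
  have hy : 0 < 1 + a / d := by positivity
  have hy₁ : 1 + a / d ≠ 1 := by simpa using (div_pos ha hd).ne'
  calc a / (d + a) = 1 - (1 + a / d)⁻¹ := by field_simp; ring
    _ < log (1 + a / d) := one_sub_inv_lt_log hy hy₁

lemma Real.mul_div_lt_log_one_add_div {a b c x : ℝ} (ha : 0 < a) (hc : 0 < c)
    (hd : 0 < b * x + c) :
    a * b * x / ((b * x + c) * (b * x + c + a)) < log (1 + a / (b * x + c)) :=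
  calc a * b * x / ((b * x + c) * (b * x + c + a))
      < a / (b * x + c + a) := by
        rw [div_lt_div_iff₀ (by positivity) (by positivity)]
        nlinarith [mul_pos (mul_pos ha hc) (add_pos hd ha)]
    _ < log (1 + a / (b * x + c)) := div_add_lt_log_one_add_div ha hd

lemma Real.mul_div_lt_logb_one_add_div {β a b c x : ℝ} (hβ : 1 < β) (ha : 0 < a) (hc : 0 < c)
    (hd : 0 < b * x + c) :
    a * b * x / (log β * (b * x + c) * (b * x + c + a)) < logb β (1 + a / (b * x + c)) := by
  rw [logb, mul_assoc (log β), div_mul_eq_div_div_swap]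
  exact div_lt_div_of_pos_right (mul_div_lt_log_one_add_div ha hc hd) (log_pos hβ)

lemma Real.hasDerivAt_mul_logb_one_add_div (β : ℝ) {a b c x : ℝ} (hd : b * x + c ≠ 0)
    (hda : b * x + c + a ≠ 0) :
    HasDerivAt (fun x : ℝ => x * logb β (1 + a / (b * x + c)))
      (logb β (1 + a / (b * x + c)) -
        a * b * x / (log β * (b * x + c) * (b * x + c + a))) x := by
  have hy : 1 + a / (b * x + c) ≠ 0 := by
    rw [one_add_div hd]
    exact div_ne_zero hda hd
  have hlin : HasDerivAt (fun x : ℝ => b * x + c) b x := by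
    simpa using ((hasDerivAt_id x).const_mul b).add_const c
  have hlog := (((hasDerivAt_const x a).fun_div hlin hd).const_add 1).log hy
  refine ((hasDerivAt_id' x).fun_mul (hlog.div_const (log β))).congr_deriv ?_
  rw [logb]
  field_simp
  ring

/-- The rate function `x ↦ x·log₂(1 + a/(bx + c))` is strictly increasing on
`(0, ∞)` for `a, b, c > 0`; equivalently, its first derivative
`log₂(1 + a/(bx+c)) − abx/(ln2·(bx+c)·(bx+c+a))` is strictly positive for all
`x > 0`. -/
theorem rate_strictly_increasing (a b c : ℝ) (ha : 0 < a) (hb : 0 < b)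
    (hc : 0 < c) :
    (∀ x : ℝ, 0 < x →
      0 < Real.logb 2 (1 + a / (b * x + c)) -
        a * b * x / (Real.log 2 * (b * x + c) * (b * x + c + a))) ∧
    StrictMonoOn (fun x : ℝ => x * Real.logb 2 (1 + a / (b * x + c)))
      (Set.Ioi 0) := by
  have hderiv_pos : ∀ x : ℝ, 0 < x →
      0 < logb 2 (1 + a / (b * x + c)) -
        a * b * x / (log 2 * (b * x + c) * (b * x + c + a)) := fun x hx =>
    sub_pos.2 (mul_div_lt_logb_one_add_div one_lt_two ha hc (by positivity))
  have hderiv : ∀ x ∈ Ioi (0 : ℝ), HasDerivAt (fun x : ℝ => x * logb 2 (1 + a / (b * x + c)))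
      (logb 2 (1 + a / (b * x + c)) -
        a * b * x / (log 2 * (b * x + c) * (b * x + c + a))) x := fun x (hx : 0 < x) =>
    hasDerivAt_mul_logb_one_add_div 2 (by positivity) (by positivity)
  refine ⟨hderiv_pos, strictMonoOn_of_deriv_pos (convex_Ioi 0)
    (fun x hx => (hderiv x hx).continuousAt.continuousWithinAt) fun x hx => ?_⟩
  rw [interior_Ioi] at hx
  rw [(hderiv x hx).deriv]
  exact hderiv_pos x hx
end
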